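/- arXiv:1703.06335 — 4 statements merged into one kernel-verified Lean document; each statement's English description precedes it below -/
import Mathlib

section
/- Let α₁, α₂ ∈ (1,2). Then α₁ < α₂ if and only if the signed digit sequence d_{α₂} of 1 under S_{α₂} is strictly smaller than d_{α₁} in the lexicographical ordering. -/
/-- The symmetric doubling map `S_α` on `[-1,1]`. -/
noncomputable def S (α x : ℝ) : ℝ :=
  if x < -(1/2) then 2*x + α else if x ≤ 1/2 then 2*x else 2*x - α

/-- The signed digit `d_{α,n+1}(x) ∈ {-1,0,1}` determined by the position of `S_α^[n] x`. -/
noncomputable def dig (α x : ℝ) (n : ℕ) : ℤ :=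
  if (S α)^[n] x < -(1/2) then -1 else if (S α)^[n] x ≤ 1/2 then 0 else 1

/-- Strict lexicographical order on digit sequences. -/
def lexLt (a b : ℕ → ℤ) : Prop := ∃ n, (∀ k < n, a k = b k) ∧ a n < b n

lemma orbit_mem {α : ℝ} (h : α ∈ Set.Ioo (1:ℝ) 2) (n : ℕ) :
    (S α)^[n] 1 ∈ Set.Icc (-1:ℝ) 1 := by
  obtain ⟨ha1, ha2⟩ := h
  induction n with
  | zero => constructor <;> norm_num
  | succ n ih =>
    obtain ⟨l, r⟩ := ih
    rw [Function.iterate_succ_apply', S]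
    split_ifs with h3 h4 <;> constructor <;> linarith

lemma orbit_step (α : ℝ) (n : ℕ) :
    (S α)^[n+1] 1 = 2 * (S α)^[n] 1 - (dig α 1 n : ℝ) * α := by
  rw [Function.iterate_succ_apply', S, dig]
  split_ifs <;> push_cast <;> ring

lemma invariant {α₁ α₂ : ℝ} {n : ℕ}
    (hpre : ∀ k < n, dig α₁ 1 k = dig α₂ 1 k) :
    α₂ * (2^n - (S α₁)^[n] 1) = α₁ * (2^n - (S α₂)^[n] 1) := by
  induction n with
  | zero => simp
  | succ n ih =>
    have ihn := ih (fun k hk => hpre k (Nat.lt_succ_of_lt hk))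
    have hd := hpre n (Nat.lt_succ_self n)
    rw [orbit_step α₁ n, orbit_step α₂ n, hd]
    push_cast
    linear_combination 2 * ihn

lemma dig_mono {α₁ α₂ : ℝ} {n : ℕ} (h : (S α₂)^[n] 1 ≤ (S α₁)^[n] 1) :
    dig α₂ 1 n ≤ dig α₁ 1 n := by
  unfold dig
  split_ifs <;> (try norm_num) <;> linarith

lemma dig_zero {α : ℝ} : dig α 1 0 = 1 := by
  unfold dig
  norm_num

lemma digits_ne {α₁ α₂ : ℝ} (h1 : α₁ ∈ Set.Ioo (1:ℝ) 2) (h2 : α₂ ∈ Set.Ioo (1:ℝ) 2)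
    (hlt : α₁ < α₂) : ∃ n, dig α₁ 1 n ≠ dig α₂ 1 n := by
  by_contra hc
  push_neg at hc
  obtain ⟨n, hn⟩ := pow_unbounded_of_one_lt ((α₁ + α₂) / (α₂ - α₁)) (by norm_num : (1:ℝ) < 2)
  have hinv := invariant (α₁ := α₁) (α₂ := α₂) (n := n) (fun k _ => hc k)
  obtain ⟨l1, r1⟩ := orbit_mem h1 n
  obtain ⟨l2, r2⟩ := orbit_mem h2 n
  obtain ⟨ha1, ha2⟩ := h1
  obtain ⟨hb1, hb2⟩ := h2
  have hpos : (0:ℝ) < α₂ - α₁ := by linarith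
  rw [div_lt_iff₀ hpos] at hn
  nlinarith [hn, hinv]

lemma forward {α₁ α₂ : ℝ} (h1 : α₁ ∈ Set.Ioo (1:ℝ) 2) (h2 : α₂ ∈ Set.Ioo (1:ℝ) 2)
    (hlt : α₁ < α₂) : lexLt (fun n => dig α₂ 1 n) (fun n => dig α₁ 1 n) := by
  classical
  have hne := digits_ne h1 h2 hlt
  set n := Nat.find hne with hn_def
  have hspec : dig α₁ 1 n ≠ dig α₂ 1 n := Nat.find_spec hne
  have hpre : ∀ k < n, dig α₁ 1 k = dig α₂ 1 k := by
    intro k hk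
    have := Nat.find_min hne hk
    simpa using this
  have hn1 : 1 ≤ n := by
    rcases Nat.eq_zero_or_pos n with h | h
    · exfalso; apply hspec; rw [h, dig_zero, dig_zero]
    · exact h
  have hinv := invariant (α₁ := α₁) (α₂ := α₂) hpre
  obtain ⟨l1, r1⟩ := orbit_mem h1 n
  obtain ⟨l2, r2⟩ := orbit_mem h2 n
  obtain ⟨ha1, ha2⟩ := h1
  obtain ⟨hb1, hb2⟩ := h2
  have h2n : (2:ℝ) ≤ 2^n := by
    calc (2:ℝ) = 2^1 := by norm_num
    _ ≤ 2^n := pow_le_pow_right₀ (by norm_num) hn1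
  have hxlt : (S α₂)^[n] 1 < (S α₁)^[n] 1 := by
    by_contra hcon
    push_neg at hcon
    nlinarith [hinv, h2n]
  refine ⟨n, fun k hk => (hpre k hk).symm, ?_⟩
  exact lt_of_le_of_ne (dig_mono hxlt.le) (Ne.symm hspec)

lemma lexLt_asymm {a b : ℕ → ℤ} (h1 : lexLt a b) (h2 : lexLt b a) : False := by
  obtain ⟨n, hpn, hn⟩ := h1
  obtain ⟨m, hpm, hm⟩ := h2
  rcases lt_trichotomy n m with h | h | h
  · have := hpm n h; omega
  · subst h; omega
  · have := hpn m h; omega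

theorem stmt3 (α₁ α₂ : ℝ) (h1 : α₁ ∈ Set.Ioo (1:ℝ) 2) (h2 : α₂ ∈ Set.Ioo (1:ℝ) 2) :
    α₁ < α₂ ↔ lexLt (fun n => dig α₂ 1 n) (fun n => dig α₁ 1 n) := by
  constructor
  · exact forward h1 h2
  · intro hlex
    rcases lt_trichotomy α₁ α₂ with h | h | h
    · exact h
    · subst h
      obtain ⟨n, _, hn⟩ := hlex
      exact absurd hn (lt_irrefl _)
    · exact (lexLt_asymm hlex (forward h2 h1 h)).elim
end

section
/- For every α in (1, 3/2) and every n ≥ 0, the difference S_α^n(1) − S_α^n(1−α) is equal to 0 or to α. -/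
lemma S_mem (α : ℝ) (hα : α ∈ Set.Ioo (1:ℝ) (3/2)) {x : ℝ}
    (hx : x ∈ Set.Icc (-1:ℝ) 1) : S α x ∈ Set.Icc (-1:ℝ) 1 := by
  obtain ⟨h1, h2⟩ := hα
  obtain ⟨hx1, hx2⟩ := hx
  unfold S
  split_ifs with h h' <;> constructor <;> simp at * <;> nlinarith

lemma S_step (α : ℝ) (hα : α ∈ Set.Ioo (1:ℝ) (3/2)) {a b : ℝ}
    (ha : a ∈ Set.Icc (-1:ℝ) 1) (hb : b ∈ Set.Icc (-1:ℝ) 1)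
    (hd : a - b = 0 ∨ a - b = α) :
    S α a - S α b = 0 ∨ S α a - S α b = α := by
  obtain ⟨h1, h2⟩ := hα
  obtain ⟨ha1, ha2⟩ := ha
  obtain ⟨hb1, hb2⟩ := hb
  rcases hd with hd | hd
  · left; have : a = b := by linarith
    rw [this]; ring
  · unfold S
    split_ifs with p q r s t u v w <;> first
      | (left; linarith) | (right; linarith) | (exfalso; linarith)

theorem stmt4 (α : ℝ) (hα : α ∈ Set.Ioo (1:ℝ) (3/2)) (n : ℕ) :
    (S α)^[n] 1 - (S α)^[n] (1 - α) = 0 ∨ (S α)^[n] 1 - (S α)^[n] (1 - α) = α := by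
  obtain ⟨h1, h2⟩ := hα
  have key : ∀ n : ℕ, (S α)^[n] 1 ∈ Set.Icc (-1:ℝ) 1 ∧
      (S α)^[n] (1 - α) ∈ Set.Icc (-1:ℝ) 1 ∧
      ((S α)^[n] 1 - (S α)^[n] (1 - α) = 0 ∨ (S α)^[n] 1 - (S α)^[n] (1 - α) = α) := by
    intro n
    induction n with
    | zero =>
      refine ⟨by simp, ?_, Or.inr (by simp)⟩
      constructor <;> simp <;> linarith
    | succ k ih =>
      obtain ⟨ia, ib, id⟩ := ih
      rw [Function.iterate_succ_apply', Function.iterate_succ_apply']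
      exact ⟨S_mem α ⟨h1, h2⟩ ia, S_mem α ⟨h1, h2⟩ ib, S_step α ⟨h1, h2⟩ ia ib id⟩
  exact (key n).2.2
end

section
/- Let α ∈ (1,3/2) and let m ≥ 1 be minimal with either S_α^m(1) ∈ (1/2, α−1/2) or D^m(1/α) ∈ (1/(2α), 1−1/(2α)), where D is the doubling map. Then S_α^n(1) = α·D^n(1/α) for all 0 ≤ n ≤ m. -/
/-- The doubling map `D(x) = 2x (mod 1)`. -/
noncomputable def D (x : ℝ) : ℝ := Int.fract (2*x)

theorem stmt6 (α : ℝ) (hα : α ∈ Set.Ioo (1:ℝ) (3/2)) (m : ℕ) (hm1 : 1 ≤ m)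
    (hm : (S α)^[m] 1 ∈ Set.Ioo (1/2) (α - 1/2) ∨
          D^[m] (1/α) ∈ Set.Ioo (1/(2*α)) (1 - 1/(2*α)))
    (hmin : ∀ k < m, ¬((S α)^[k] 1 ∈ Set.Ioo (1/2) (α - 1/2) ∨
          D^[k] (1/α) ∈ Set.Ioo (1/(2*α)) (1 - 1/(2*α)))) :
    ∀ n ≤ m, (S α)^[n] 1 = α * D^[n] (1/α) := by
  obtain ⟨hα1, hα2⟩ := hα
  have hα0 : (0:ℝ) < α := by linarith
  intro n hn
  induction n with
  | zero =>
    simp only [Function.iterate_zero, id_eq]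
    field_simp
  | succ k ih =>
    have hk : k < m := hn
    have ihk := ih hk.le
    set y := D^[k] (1/α) with hy
    have hy01 : 0 ≤ y ∧ y < 1 := by
      cases k with
      | zero =>
        simp only [hy, Function.iterate_zero, id_eq]
        constructor
        · positivity
        · rw [div_lt_one hα0]; linarith
      | succ j =>
        rw [hy, Function.iterate_succ_apply']
        exact ⟨Int.fract_nonneg _, Int.fract_lt_one _⟩
    obtain ⟨hy0, hy1⟩ := hy01
    have hB : ¬ (y ∈ Set.Ioo (1/(2*α)) (1 - 1/(2*α))) :=
      fun h => hmin k hk (Or.inr (hy ▸ h))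
    rw [Function.iterate_succ_apply', Function.iterate_succ_apply', ihk, ← hy]
    -- goal : S α (α * y) = α * D y
    by_cases h : y ≤ 1/(2*α)
    · have h1 : α * y ≤ 1/2 := by
        calc α * y ≤ α * (1/(2*α)) := by nlinarith
        _ = 1/2 := by field_simp
      have h2 : ¬ (α * y < -(1/2)) := by nlinarith
      have h3 : 2 * y < 1 := by
        calc 2 * y ≤ 2 * (1/(2*α)) := by linarith
        _ = 1/α := by field_simp
        _ < 1 := by rw [div_lt_one hα0]; linarith
      rw [S, D, if_neg h2, if_pos h1, Int.fract_eq_self.mpr ⟨by linarith, h3⟩]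
      ring
    · push_neg at h
      have hge : 1 - 1/(2*α) ≤ y := by
        by_contra hc
        push_neg at hc
        exact hB ⟨h, hc⟩
      have hinv : 1/(2*α) < 1/2 := by
        rw [div_lt_div_iff₀ (by linarith) (by norm_num)]; linarith
      have h1 : ¬ (α * y ≤ 1/2) := by
        push_neg
        calc (1:ℝ)/2 = α * (1/(2*α)) := by field_simp
        _ < α * y := by nlinarith
      have h2 : ¬ (α * y < -(1/2)) := by nlinarith
      have hlow : 0 ≤ 2 * y - 1 := by
        have : 1/(2*α) ≤ 1/2 := hinv.le
        linarith
      have hhigh : 2 * y - 1 < 1 := by linarith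
      rw [S, D, if_neg h2, if_neg h1]
      have : Int.fract (2*y) = 2*y - 1 := by
        have := Int.fract_sub_intCast (2*y) 1
        rw [← this]
        push_cast
        exact Int.fract_eq_self.mpr ⟨hlow, hhigh⟩
      rw [this]; ring
end

section
/- Let ω = ω₁⋯ω_m ∈ {0,1}^m with ω_m = 1, and define ψ(ω) = ω₁⋯ω_m(1−ω₁)⋯(1−ω_{m-1})1, a word of length 2m. Then L(ω) = R(ψ(ω)), i.e., (2^m+1)/(x_m+1) = (2^{2m}−1)/(x_{2m}−1), where x_m and x_{2m} are the integers whose binary representations are ω and ψ(ω) respectively. -/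
/-!
The bits of `ψ(ω)` after the first `m` are, apart from the final `1`, the complements of
`ω₁ ⋯ ω_{m-1}`; since `ω_m = 1`, their value is `2^m - 1 - x_m`. Hence
`x_{2m} - 1 = x_m 2^m + (2^m - 1 - x_m) = (x_m + 1)(2^m - 1)`, while `2^{2m} - 1 = (2^m + 1)(2^m - 1)`,
and the common factor `2^m - 1 ≠ 0` cancels.
-/

open Finset

theorem sum_range_two_pow_sub {R : Type*} [CommRing R] (n : ℕ) :
    ∑ j ∈ range n, (2 : R) ^ (n - j) = 2 ^ (n + 1) - 2 := by
  induction n with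
  | zero => simp
  | succ n ih =>
    rw [sum_range_succ', Nat.sub_zero]
    simp only [Nat.succ_sub_succ, ih]
    ring

theorem sum_bits_add_sum_complement_bits {R : Type*} [CommRing R] (n : ℕ) (ω : ℕ → R) :
    ∑ j ∈ range n, ω j * 2 ^ (n - j) + ∑ j ∈ range n, (1 - ω j) * 2 ^ (n - j)
      = 2 ^ (n + 1) - 2 := by
  rw [← sum_add_distrib, ← sum_range_two_pow_sub]
  exact sum_congr rfl fun j _ => by ring

theorem stmt14_general (m : ℕ) (hm : 0 < m) (ω : ℕ → ℝ)
    (hlast : ω (m-1) = 1) :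
    ((2:ℝ)^m + 1) / ((∑ j ∈ Finset.range m, ω j * 2^(m-1-j)) + 1)
      = ((2:ℝ)^(2*m) - 1) /
        (((∑ j ∈ Finset.range m, ω j * 2^(m-1-j)) * 2^m
          + (∑ j ∈ Finset.range (m-1), (1 - ω j) * 2^(m-1-j)) + 1) - 1) := by
  obtain ⟨n, rfl⟩ := Nat.exists_eq_add_one_of_ne_zero hm.ne'
  simp only [Nat.add_sub_cancel] at hlast ⊢
  set x := ∑ j ∈ range (n + 1), ω j * 2 ^ (n - j)
  have hcompl : ∑ j ∈ range n, (1 - ω j) * 2 ^ (n - j) = 2 ^ (n + 1) - 1 - x := by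
    have := sum_bits_add_sum_complement_bits n ω
    simp only [x, sum_range_succ, Nat.sub_self, hlast]
    linarith
  have hne : (2:ℝ) ^ (n + 1) - 1 ≠ 0 :=
    sub_ne_zero.mpr (one_lt_pow₀ one_lt_two n.succ_ne_zero).ne'
  rw [hcompl]
  calc ((2:ℝ) ^ (n + 1) + 1) / (x + 1)
      = (2 ^ (n + 1) + 1) * (2 ^ (n + 1) - 1) / ((x + 1) * (2 ^ (n + 1) - 1)) :=
        (mul_div_mul_right _ _ hne).symm
    _ = _ := by rw [two_mul, pow_add]; ring_nf

theorem stmt14 (m : ℕ) (hm : 0 < m) (ω : ℕ → ℝ) (hω : ∀ j < m, ω j = 0 ∨ ω j = 1)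
    (hlast : ω (m-1) = 1) :
    ((2:ℝ)^m + 1) / ((∑ j ∈ Finset.range m, ω j * 2^(m-1-j)) + 1)
      = ((2:ℝ)^(2*m) - 1) /
        (((∑ j ∈ Finset.range m, ω j * 2^(m-1-j)) * 2^m
          + (∑ j ∈ Finset.range (m-1), (1 - ω j) * 2^(m-1-j)) + 1) - 1) :=
  stmt14_general m hm ω hlast
end
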